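/- Let f ∈ ℤ_p[T] be a distinguished polynomial of degree d, i.e. f is monic of degree d and every coefficient of f other than the leading one is divisible by p. Then the quotient ℤ_p[[T]]/(f) of the power series ring is a free ℤ_p-module of rank d, with basis the images of 1, T, …, T^{d−1}. -/

import Mathlib

/-!
Weierstrass division by a distinguished polynomial `f` over the `p`-adically complete ring `ℤ_[p]`
makes the natural map `ℤ_[p][X] ⧸ (f) → ℤ_[p]⟦X⟧ ⧸ (f)` an isomorphism, and since `f` is monic
the left side has the power basis `1, X, …, X ^ (d - 1)`.
-/

open Polynomial PowerSeries IsLocalRing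

namespace Polynomial.IsDistinguishedAt

variable {A : Type*} [CommRing A] {I : Ideal A} [IsAdicComplete I A] {g : A[X]}

noncomputable def powerSeriesQuotientPowerBasis (H : g.IsDistinguishedAt I) :
    PowerBasis A (A⟦X⟧ ⧸ Ideal.span {(g : A⟦X⟧)}) :=
  (AdjoinRoot.powerBasis' H.monic).map H.algEquivQuotient

theorem powerSeriesQuotientPowerBasis_gen (H : g.IsDistinguishedAt I) :
    H.powerSeriesQuotientPowerBasis.gen = Ideal.Quotient.mk _ PowerSeries.X := by
  refine (PowerBasis.map_gen _ _).trans ?_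
  -- `AdjoinRoot g` is `A[X] ⧸ span {g}` only after unfolding, so `simp` needs the quotient form
  change H.algEquivQuotient (Ideal.Quotient.mk _ Polynomial.X) = _
  simp

theorem powerSeriesQuotientPowerBasis_dim (H : g.IsDistinguishedAt I) :
    H.powerSeriesQuotientPowerBasis.dim = g.natDegree :=
  rfl

end Polynomial.IsDistinguishedAt

theorem PadicInt.isDistinguishedAt_maximalIdeal {p : ℕ} [Fact p.Prime] {f : ℤ_[p][X]}
    (hmonic : f.Monic) (hdist : ∀ i < f.natDegree, (p : ℤ_[p]) ∣ f.coeff i) :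
    f.IsDistinguishedAt (maximalIdeal ℤ_[p]) :=
  ⟨⟨fun hi ↦ by simpa [PadicInt.maximalIdeal_eq_span_p, Ideal.mem_span_singleton] using hdist _ hi⟩,
    hmonic⟩

/-- Weierstrass: if f ∈ ℤ_p[T] is a distinguished polynomial of degree d (monic, all
lower coefficients divisible by p), then ℤ_p[[T]]/(f) is free of rank d over ℤ_p with
basis the images of 1, T, …, T^{d-1}. -/
theorem padic_powerSeries_quotient_distinguished_free (p : ℕ) [Fact p.Prime]
    (f : Polynomial ℤ_[p]) (d : ℕ) (hmonic : f.Monic) (hdeg : f.natDegree = d)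
    (hdist : ∀ i < d, (p : ℤ_[p]) ∣ f.coeff i) :
    ∃ b : Module.Basis (Fin d) ℤ_[p]
        (PowerSeries ℤ_[p] ⧸ Ideal.span ({(f : PowerSeries ℤ_[p])} : Set (PowerSeries ℤ_[p]))),
      ∀ i : Fin d, b i = Ideal.Quotient.mk _ (PowerSeries.X ^ (i : ℕ)) := by
  have H := PadicInt.isDistinguishedAt_maximalIdeal hmonic (hdeg ▸ hdist)
  set pb := H.powerSeriesQuotientPowerBasis
  refine ⟨pb.basis.reindex (finCongr (H.powerSeriesQuotientPowerBasis_dim.trans hdeg)), fun i ↦ ?_⟩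
  rw [Module.Basis.reindex_apply, PowerBasis.basis_eq_pow, H.powerSeriesQuotientPowerBasis_gen,
    map_pow]
  rfl
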